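/- arXiv:2002.05336 — 6 statements merged into one kernel-verified Lean document; each statement's English description precedes it below -/
import Mathlib

section
/- If a simple graph G on n vertices contains no copy of the complete bipartite graph K_{s,t} (with s, t >= 2), then the sum over all vertices v of C(deg(v), t) is at most (s-1) * C(n, t). -/
/-!
Count pairs `(v, T)` with `T` a `t`-set of neighbours of `v`. Grouping by `v` gives
`∑ v, C(deg v, t)`; grouping by `T`, each `t`-set has at most `s - 1` common neighbours,
since `s` of them together with `T` would form a `K_{s,t}`.
-/

open Finset

lemma Finset.sum_choose_card_eq_sum_card_filter_subset {α β : Type*} [Fintype α]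
    [DecidableEq α] (s : Finset β) (f : β → Finset α) (t : ℕ) :
    ∑ v ∈ s, (#(f v)).choose t = ∑ T ∈ powersetCard t univ, #{v ∈ s | T ⊆ f v} := by
  calc ∑ v ∈ s, (#(f v)).choose t
      = ∑ v ∈ s, #{T ∈ powersetCard t univ | T ⊆ f v} := by
        refine sum_congr rfl fun v _ ↦ ?_
        rw [← card_powersetCard]
        congr 1
        ext T
        simp only [mem_powersetCard, mem_filter, subset_univ, true_and, and_comm]
    _ = ∑ T ∈ powersetCard t univ, #{v ∈ s | T ⊆ f v} :=
        sum_card_bipartiteAbove_eq_sum_card_bipartiteBelow _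

namespace SimpleGraph

variable {V : Type*} [Fintype V] [DecidableEq V] (G : SimpleGraph V) [DecidableRel G.Adj]

lemma card_filter_subset_neighborFinset_le {s t : ℕ}
    (hfree : ¬ ∃ A B : Finset V, #A = s ∧ #B = t ∧ Disjoint A B ∧
      ∀ a ∈ A, ∀ b ∈ B, G.Adj a b)
    {T : Finset V} (hT : #T = t) :
    #{v | T ⊆ G.neighborFinset v} ≤ s - 1 := by
  by_contra! hlarge
  obtain ⟨A, hAT, hA⟩ := exists_subset_card_eq (s := {v | T ⊆ G.neighborFinset v})
    (n := s) (by omega)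
  have hadj : ∀ a ∈ A, ∀ b ∈ T, G.Adj a b := fun a ha b hb ↦
    (G.mem_neighborFinset a b).mp ((mem_filter.mp (hAT ha)).2 hb)
  have hdisj : Disjoint A T :=
    Finset.disjoint_left.mpr fun a ha haT ↦ G.irrefl (hadj a ha a haT)
  exact hfree ⟨A, T, hA, hT, hdisj, hadj⟩

end SimpleGraph

open SimpleGraph in
theorem choose_degree_sum_of_kst_free_general {V : Type*} [Fintype V] [DecidableEq V]
    (G : SimpleGraph V) [DecidableRel G.Adj] (s t : ℕ)
    (hfree : ¬ ∃ A B : Finset V, A.card = s ∧ B.card = t ∧ Disjoint A B ∧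
      ∀ a ∈ A, ∀ b ∈ B, G.Adj a b) :
    ∑ v, (G.degree v).choose t ≤ (s - 1) * (Fintype.card V).choose t := by
  calc ∑ v, (G.degree v).choose t
      = ∑ T ∈ powersetCard t univ, #{v | T ⊆ G.neighborFinset v} := by
        simp only [← card_neighborFinset_eq_degree]
        exact sum_choose_card_eq_sum_card_filter_subset _ _ t
    _ ≤ ∑ _T ∈ powersetCard t (univ : Finset V), (s - 1) :=
        sum_le_sum fun T hT ↦
          G.card_filter_subset_neighborFinset_le hfree (mem_powersetCard_univ.mp hT)
    _ = (s - 1) * (Fintype.card V).choose t := by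
        rw [sum_const, card_powersetCard, card_univ, smul_eq_mul, mul_comm]

theorem choose_degree_sum_of_kst_free {V : Type*} [Fintype V] [DecidableEq V]
    (G : SimpleGraph V) [DecidableRel G.Adj] (s t : ℕ) (hs : 2 ≤ s) (ht : 2 ≤ t)
    (hfree : ¬ ∃ A B : Finset V, A.card = s ∧ B.card = t ∧ Disjoint A B ∧
      ∀ a ∈ A, ∀ b ∈ B, G.Adj a b) :
    ∑ v, (G.degree v).choose t ≤ (s - 1) * (Fintype.card V).choose t :=
  choose_degree_sum_of_kst_free_general G s t hfree
end

section
/- (Kővári–Sós–Turán) For fixed integers s, t >= 2, there is a constant c such that every K_{s,t}-free simple graph on n vertices has at most c * n^(2 - 1/t) edges. -/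
/-!
Count the pairs `(v, T)` with `T` a `t`-subset of the neighbourhood of `v`. Vertex `v` lies in
`(deg v).choose t` of them, while a `t`-set `T` has at most `s - 1` common neighbours, since
otherwise `s` of them together with `T` span a `K_{s,t}`. Hence
`∑ (deg v).choose t ≤ (s - 1) * n.choose t`. Multiplying by `t!` and using
`(d - t)^t ≤ d.descFactorial t ≤ d^t`, then the power-mean inequality, gives
`(∑ (deg v - t))^t ≤ (s - 1) n^(2t - 1)`; finally
`|E| ≤ ∑ deg v ≤ ∑ (deg v - t) + t n ≤ ((s - 1)^(1/t) + t) n^(2 - 1/t)`.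
-/

open Finset

lemma Nat.sub_pow_le_descFactorial (n k : ℕ) : (n - k) ^ k ≤ n.descFactorial k :=
  (Nat.pow_le_pow_left (by omega) k).trans (Nat.pow_sub_le_descFactorial n k)

namespace SimpleGraph

variable {V : Type*} [Fintype V] [DecidableEq V] (G : SimpleGraph V) [DecidableRel G.Adj]

def ContainsCompleteBipartite (s t : ℕ) : Prop :=
  ∃ A B : Finset V, #A = s ∧ #B = t ∧ Disjoint A B ∧ ∀ a ∈ A, ∀ b ∈ B, G.Adj a b

def commonNeighborFinset (T : Finset V) : Finset V :=
  {v | T ⊆ G.neighborFinset v}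

variable {G}

lemma card_commonNeighborFinset_lt {s t : ℕ} (hG : ¬ G.ContainsCompleteBipartite s t)
    {T : Finset V} (hT : #T = t) : #(G.commonNeighborFinset T) < s := by
  by_contra! hs
  obtain ⟨A, hAT, hA⟩ := exists_subset_card_eq hs
  have hadj : ∀ a ∈ A, ∀ b ∈ T, G.Adj a b := fun a ha b hb =>
    (G.mem_neighborFinset a b).1 ((mem_filter.1 (hAT ha)).2 hb)
  exact hG ⟨A, T, hA, hT, Finset.disjoint_left.2 fun a ha haT => G.irrefl (hadj a ha a haT), hadj⟩

variable (G) in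
lemma sum_choose_degree_eq_sum_card_commonNeighborFinset (t : ℕ) :
    ∑ v, (G.degree v).choose t = ∑ T ∈ powersetCard t univ, #(G.commonNeighborFinset T) := by
  have hsubsets : ∀ v, (powersetCard t univ).bipartiteAbove (fun v T => T ⊆ G.neighborFinset v) v
      = powersetCard t (G.neighborFinset v) := fun v => by
    ext T
    simp [mem_powersetCard, and_comm]
  simp_rw [← card_neighborFinset_eq_degree, ← card_powersetCard, ← hsubsets]
  exact sum_card_bipartiteAbove_eq_sum_card_bipartiteBelow _

lemma sum_choose_degree_le {s t : ℕ} (hG : ¬ G.ContainsCompleteBipartite s t) :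
    ∑ v, (G.degree v).choose t ≤ (s - 1) * (Fintype.card V).choose t := by
  rw [sum_choose_degree_eq_sum_card_commonNeighborFinset, mul_comm, ← card_univ,
    ← card_powersetCard, ← smul_eq_mul]
  exact sum_le_card_nsmul _ _ _ fun T hT =>
    Nat.le_sub_one_of_lt (card_commonNeighborFinset_lt hG (mem_powersetCard.1 hT).2)

lemma sum_pow_degree_sub_le {s t : ℕ} (hG : ¬ G.ContainsCompleteBipartite s t) :
    ∑ v, (G.degree v - t) ^ t ≤ (s - 1) * Fintype.card V ^ t := by
  calc ∑ v, (G.degree v - t) ^ t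
      ≤ ∑ v, (G.degree v).descFactorial t := sum_le_sum fun v _ => Nat.sub_pow_le_descFactorial _ _
    _ = t.factorial * ∑ v, (G.degree v).choose t := by
      simp only [mul_sum, Nat.descFactorial_eq_factorial_mul_choose]
    _ ≤ t.factorial * ((s - 1) * (Fintype.card V).choose t) :=
      Nat.mul_le_mul_left _ (sum_choose_degree_le hG)
    _ = (s - 1) * (Fintype.card V).descFactorial t := by
      rw [Nat.descFactorial_eq_factorial_mul_choose]; ring
    _ ≤ (s - 1) * Fintype.card V ^ t := Nat.mul_le_mul_left _ (Nat.descFactorial_le_pow _ _)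

lemma pow_sum_degree_sub_le {s t : ℕ} (hG : ¬ G.ContainsCompleteBipartite s t) (ht : t ≠ 0) :
    (∑ v, (G.degree v - t)) ^ t ≤ (s - 1) * Fintype.card V ^ (2 * t - 1) := by
  obtain ⟨k, rfl⟩ := Nat.exists_eq_succ_of_ne_zero ht
  calc (∑ v, (G.degree v - (k + 1))) ^ (k + 1)
      ≤ Fintype.card V ^ k * ∑ v, (G.degree v - (k + 1)) ^ (k + 1) :=
        pow_sum_le_card_mul_sum_pow (fun _ _ => Nat.zero_le _) k
    _ ≤ Fintype.card V ^ k * ((s - 1) * Fintype.card V ^ (k + 1)) :=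
        Nat.mul_le_mul_left _ (sum_pow_degree_sub_le hG)
    _ = (s - 1) * Fintype.card V ^ (2 * (k + 1) - 1) := by
      rw [show 2 * (k + 1) - 1 = k + (k + 1) by omega, pow_add]; ring

omit [DecidableEq V] in
variable (G) in
lemma card_edgeFinset_le_sum_degree_sub_add (t : ℕ) :
    #G.edgeFinset ≤ ∑ v, (G.degree v - t) + t * Fintype.card V := by
  have hdeg : ∑ v, G.degree v ≤ ∑ v, (G.degree v - t) + t * Fintype.card V := by
    calc ∑ v, G.degree v ≤ ∑ v, ((G.degree v - t) + t) := sum_le_sum fun v _ => le_tsub_add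
      _ = ∑ v, (G.degree v - t) + t * Fintype.card V := by
        rw [sum_add_distrib, sum_const, card_univ, smul_eq_mul, mul_comm]
  have hsum := G.sum_degrees_eq_twice_card_edges
  omega

end SimpleGraph

lemma Real.le_rpow_mul_rpow_of_pow_le {x a n : ℝ} (hx : 0 ≤ x) (ha : 0 ≤ a) (hn : 0 ≤ n) {t : ℕ}
    (ht : t ≠ 0) (h : x ^ t ≤ a * n ^ (2 * t - 1)) :
    x ≤ a ^ (1 / (t : ℝ)) * n ^ (2 - 1 / (t : ℝ)) := by
  have htR : (t : ℝ) ≠ 0 := Nat.cast_ne_zero.2 ht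
  have hpow : (a ^ (1 / (t : ℝ)) * n ^ (2 - 1 / (t : ℝ))) ^ t = a * n ^ (2 * t - 1) := by
    rw [mul_pow, ← Real.rpow_mul_natCast ha, ← Real.rpow_mul_natCast hn, one_div_mul_cancel htR,
      Real.rpow_one, sub_mul, one_div_mul_cancel htR, ← Real.rpow_natCast n (2 * t - 1)]
    push_cast [Nat.one_le_iff_ne_zero.2 ht, show 1 ≤ 2 * t by omega]
    ring_nf
  rw [← pow_le_pow_iff_left₀ hx (by positivity) ht, hpow]
  exact h

lemma Real.natCast_le_rpow (n : ℕ) {y : ℝ} (hy : 1 ≤ y) : (n : ℝ) ≤ (n : ℝ) ^ y := by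
  rcases Nat.eq_zero_or_pos n with rfl | hn
  · simp [Real.zero_rpow (by linarith : y ≠ 0)]
  · exact Real.self_le_rpow_of_one_le (by exact_mod_cast hn) hy

theorem kovari_sos_turan_general (s t : ℕ) (ht : 2 ≤ t) :
    ∃ c : ℝ, ∀ (V : Type) [Fintype V] [DecidableEq V]
      (G : SimpleGraph V) [DecidableRel G.Adj],
      (¬ ∃ A B : Finset V, A.card = s ∧ B.card = t ∧ Disjoint A B ∧
        ∀ a ∈ A, ∀ b ∈ B, G.Adj a b) →
      (G.edgeFinset.card : ℝ) ≤ c * (Fintype.card V : ℝ) ^ (2 - 1 / (t : ℝ)) := by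
  refine ⟨((s - 1 : ℕ) : ℝ) ^ (1 / (t : ℝ)) + t, fun V _ _ G _ hG => ?_⟩
  have ht0 : t ≠ 0 := by omega
  have hx := Real.le_rpow_mul_rpow_of_pow_le (x := ((∑ v, (G.degree v - t) : ℕ) : ℝ))
    (a := ((s - 1 : ℕ) : ℝ)) (n := Fintype.card V) (by positivity) (by positivity) (by positivity)
    ht0 (by exact_mod_cast G.pow_sum_degree_sub_le hG ht0)
  have hn := Real.natCast_le_rpow (Fintype.card V) (y := 2 - 1 / (t : ℝ)) (by
    have : 1 / (t : ℝ) ≤ 1 := by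
      rw [div_le_one (by positivity)]; exact_mod_cast (by omega : 1 ≤ t)
    linarith)
  calc (#G.edgeFinset : ℝ) ≤ ((∑ v, (G.degree v - t) : ℕ) : ℝ) + t * Fintype.card V := by
        exact_mod_cast G.card_edgeFinset_le_sum_degree_sub_add t
    _ ≤ ((s - 1 : ℕ) : ℝ) ^ (1 / (t : ℝ)) * (Fintype.card V : ℝ) ^ (2 - 1 / (t : ℝ))
        + t * (Fintype.card V : ℝ) ^ (2 - 1 / (t : ℝ)) := by gcongr
    _ = _ := by ring

theorem kovari_sos_turan (s t : ℕ) (hs : 2 ≤ s) (ht : 2 ≤ t) :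
    ∃ c : ℝ, ∀ (V : Type) [Fintype V] [DecidableEq V]
      (G : SimpleGraph V) [DecidableRel G.Adj],
      (¬ ∃ A B : Finset V, A.card = s ∧ B.card = t ∧ Disjoint A B ∧
        ∀ a ∈ A, ∀ b ∈ B, G.Adj a b) →
      (G.edgeFinset.card : ℝ) ≤ c * (Fintype.card V : ℝ) ^ (2 - 1 / (t : ℝ)) :=
  kovari_sos_turan_general s t ht
end

section
/- Every K_{2,2}-free simple graph on n vertices has at most (1/2)(1 + sqrt(4n - 3)) * n / 2 edges; in particular at most n^(3/2) edges for n >= 1. -/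
open Finset


theorem k22_aux1 {V : Type*} [Fintype V] [DecidableEq V]
    (G : SimpleGraph V) [DecidableRel G.Adj]
    (hfree : ∀ u w : V, u ≠ w →
      (G.neighborFinset u ∩ G.neighborFinset w).card < 2) :
    ∑ v, G.degree v * G.degree v ≤ ∑ v, G.degree v + Fintype.card V * (Fintype.card V - 1) := by
  have hdeg : ∀ v, G.degree v = ∑ u, if G.Adj v u then 1 else 0 := by
    intro v
    rw [SimpleGraph.degree,
      show G.neighborFinset v = univ.filter (fun u => G.Adj v u) from by ext u; simp,
      Finset.card_filter]
  have hsq : ∀ v, G.degree v * G.degree v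
      = ∑ u, ∑ w, if G.Adj v u ∧ G.Adj v w then 1 else 0 := by
    intro v
    rw [hdeg, Finset.sum_mul_sum]
    refine Finset.sum_congr rfl fun u _ => Finset.sum_congr rfl fun w _ => ?_
    by_cases h1 : G.Adj v u <;> by_cases h2 : G.Adj v w <;> simp [h1, h2]
  have hsplit : ∀ v, (∑ u, ∑ w : V, if G.Adj v u ∧ G.Adj v w then (1:ℕ) else 0)
      = (∑ u : V, if G.Adj v u then 1 else 0)
        + ∑ u, ∑ w : V, if u ≠ w ∧ G.Adj v u ∧ G.Adj v w then (1:ℕ) else 0 := by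
    intro v
    rw [← Finset.sum_add_distrib]
    refine Finset.sum_congr rfl fun u _ => ?_
    have h5 : (∑ w : V, if G.Adj v u ∧ G.Adj v w then (1:ℕ) else 0)
        = ∑ w : V, ((if u = w ∧ G.Adj v u then (1:ℕ) else 0)
            + if u ≠ w ∧ G.Adj v u ∧ G.Adj v w then 1 else 0) := by
      refine Finset.sum_congr rfl fun w _ => ?_
      by_cases h0 : u = w <;> by_cases h1 : G.Adj v u <;> by_cases h2 : G.Adj v w
        <;> simp_all
    rw [h5, Finset.sum_add_distrib]
    congr 1
    simp [ite_and]
  have hoff : (∑ v, ∑ u, ∑ w : V, if u ≠ w ∧ G.Adj v u ∧ G.Adj v w then (1:ℕ) else 0)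
      ≤ Fintype.card V * (Fintype.card V - 1) := by
    rw [Finset.sum_comm]
    rw [Finset.sum_congr rfl fun u (_ : u ∈ univ) =>
      (Finset.sum_comm : (∑ v, ∑ w : V, if u ≠ w ∧ G.Adj v u ∧ G.Adj v w then (1:ℕ) else 0)
        = ∑ w, ∑ v : V, if u ≠ w ∧ G.Adj v u ∧ G.Adj v w then (1:ℕ) else 0)]
    have key : ∀ u w : V, (∑ v : V, if u ≠ w ∧ G.Adj v u ∧ G.Adj v w then (1:ℕ) else 0)
        ≤ if u = w then 0 else 1 := by
      intro u w
      by_cases huw : u = w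
      · simp [huw]
      · simp only [huw, if_false]
        have h1 : (∑ v : V, if u ≠ w ∧ G.Adj v u ∧ G.Adj v w then (1:ℕ) else 0)
            = (G.neighborFinset u ∩ G.neighborFinset w).card := by
          rw [show G.neighborFinset u ∩ G.neighborFinset w
              = univ.filter (fun v => u ≠ w ∧ G.Adj v u ∧ G.Adj v w) from ?_,
            Finset.card_filter]
          ext v
          simp only [mem_inter, mem_filter, mem_univ, true_and,
            SimpleGraph.mem_neighborFinset]
          exact ⟨fun ⟨h1, h2⟩ => ⟨huw, h1.symm, h2.symm⟩, fun ⟨_, h1, h2⟩ => ⟨h1.symm, h2.symm⟩⟩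
        have h2 := hfree u w huw
        omega
    have hrow : ∀ u : V, (∑ w : V, if u = w then (0:ℕ) else 1) = Fintype.card V - 1 := by
      intro u
      have h2 : (∑ w : V, if u = w then (1:ℕ) else 0) = 1 := by simp
      have h3 : (∑ w : V, if u = w then (0:ℕ) else 1) + (∑ w : V, if u = w then (1:ℕ) else 0)
          = Fintype.card V := by
        rw [← Finset.sum_add_distrib]
        have h4 : ∀ w : V, ((if u = w then (0:ℕ) else 1) + if u = w then 1 else 0) = 1 :=
          fun w => by by_cases h : u = w <;> simp [h]
        simp [h4, Finset.card_univ]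
      omega
    calc (∑ u, ∑ w, ∑ v : V, if u ≠ w ∧ G.Adj v u ∧ G.Adj v w then (1:ℕ) else 0)
        ≤ ∑ u : V, ∑ w : V, if u = w then 0 else 1 :=
          Finset.sum_le_sum fun u _ => Finset.sum_le_sum fun w _ => key u w
      _ = Fintype.card V * (Fintype.card V - 1) := by
          rw [Finset.sum_congr rfl fun u _ => hrow u]
          simp [Finset.card_univ, mul_comm]
  calc ∑ v, G.degree v * G.degree v
      = ∑ v, ((∑ u : V, if G.Adj v u then (1:ℕ) else 0)
        + ∑ u, ∑ w : V, if u ≠ w ∧ G.Adj v u ∧ G.Adj v w then (1:ℕ) else 0) := by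
        refine Finset.sum_congr rfl fun v _ => ?_
        rw [hsq, hsplit]
    _ = (∑ v, G.degree v)
        + ∑ v, ∑ u, ∑ w : V, if u ≠ w ∧ G.Adj v u ∧ G.Adj v w then (1:ℕ) else 0 := by
        rw [Finset.sum_add_distrib]
        congr 1
        exact Finset.sum_congr rfl fun v _ => (hdeg v).symm
    _ ≤ _ := Nat.add_le_add_left hoff _


theorem k22_aux2 {V : Type*} [Fintype V] [DecidableEq V]
    (G : SimpleGraph V) [DecidableRel G.Adj]
    (hcount : ∑ v, G.degree v * G.degree v ≤ ∑ v, G.degree v + Fintype.card V * (Fintype.card V - 1)) :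
    (G.edgeFinset.card : ℝ) ≤
        (1 / 2) * (1 + Real.sqrt (4 * (Fintype.card V : ℝ) - 3)) *
          (Fintype.card V : ℝ) / 2 ∧
      (1 ≤ Fintype.card V →
        (G.edgeFinset.card : ℝ) ≤ (Fintype.card V : ℝ) ^ ((3 : ℝ) / 2)) := by
  have hsum : ∑ v, G.degree v = 2 * G.edgeFinset.card := by
    simpa using SimpleGraph.sum_degrees_eq_twice_card_edges G
  by_cases hn0 : Fintype.card V = 0
  · have he0 : G.edgeFinset.card = 0 := by
      have : ∑ v, G.degree v = 0 := by
        rw [show (univ : Finset V) = ∅ from Finset.univ_eq_empty_iff.mpr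
          (Fintype.card_eq_zero_iff.mp hn0)]
        simp
      omega
    rw [he0, hn0]
    norm_num
  · have hn1 : 1 ≤ Fintype.card V := Nat.one_le_iff_ne_zero.mpr hn0
    set n : ℝ := (Fintype.card V : ℝ) with hnr
    set e : ℝ := (G.edgeFinset.card : ℝ) with her
    have hnR : 1 ≤ n := by rw [hnr]; exact_mod_cast hn1
    have heR : 0 ≤ e := by positivity
    -- Cauchy-Schwarz
    have hcs : (∑ v, (G.degree v : ℝ))^2 ≤ n * ∑ v, (G.degree v : ℝ)^2 := by
      have := sq_sum_le_card_mul_sum_sq (s := (univ : Finset V))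
        (f := fun v => (G.degree v : ℝ))
      simpa [Finset.card_univ] using this
    have hsumR : ∑ v, (G.degree v : ℝ) = 2 * e := by
      rw [her, ← Nat.cast_ofNat, ← Nat.cast_mul, ← hsum]
      push_cast
      rfl
    have hcountR : ∑ v, (G.degree v : ℝ)^2 ≤ 2 * e + n * (n - 1) := by
      have h1 : ((∑ v, G.degree v * G.degree v : ℕ) : ℝ)
          ≤ ((∑ v, G.degree v + Fintype.card V * (Fintype.card V - 1) : ℕ) : ℝ) := by
        exact_mod_cast hcount
      push_cast [Nat.cast_sub hn1, hsum] at h1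
      rw [her, hnr]
      simpa [sq] using h1
    have hQ : 4 * e^2 ≤ 2 * e * n + n^2 * (n - 1) := by
      have h2 : (2*e)^2 ≤ n * (2 * e + n * (n-1)) := by
        rw [← hsumR]
        exact le_trans hcs (by nlinarith [hcountR, hnR])
      nlinarith [h2]
    set s : ℝ := Real.sqrt (4 * n - 3) with hs
    have hs2 : s^2 = 4 * n - 3 := Real.sq_sqrt (by linarith)
    have hs0 : 0 ≤ s := Real.sqrt_nonneg _
    have hs1 : 1 ≤ s := by nlinarith [hs2, hs0, hnR]
    have main : e ≤ (1/2) * (1 + s) * n / 2 := by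
      nlinarith [hQ, hs2, hs1, heR, hnR, sq_nonneg (4*e - (1+s)*n),
        mul_nonneg hs0 heR, mul_nonneg hs0 (by linarith : (0:ℝ) ≤ n)]
    refine ⟨main, fun _ => ?_⟩
    have hsqrtn : 1 ≤ Real.sqrt n := Real.one_le_sqrt.mpr hnR
    have hsle : s ≤ 2 * Real.sqrt n := by
      rw [hs]
      calc Real.sqrt (4*n-3) ≤ Real.sqrt (4*n) := Real.sqrt_le_sqrt (by linarith)
        _ = 2 * Real.sqrt n := by
            rw [show (4:ℝ)*n = 2^2*n by ring, Real.sqrt_mul (by positivity),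
              Real.sqrt_sq (by norm_num)]
    have hrpow : n ^ ((3:ℝ)/2) = n * Real.sqrt n := by
      rw [show (3:ℝ)/2 = 1 + 1/2 by norm_num, Real.rpow_add (by linarith),
        Real.rpow_one, ← Real.sqrt_eq_rpow]
    rw [hrpow]
    have hkey : (0:ℝ) ≤ (4 * Real.sqrt n - (1 + s)) * n :=
      mul_nonneg (by linarith) (by linarith)
    linarith [main, hkey]

theorem k22_free_edge_bound {V : Type*} [Fintype V] [DecidableEq V]
    (G : SimpleGraph V) [DecidableRel G.Adj]
    (hfree : ∀ u w : V, u ≠ w →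
      (G.neighborFinset u ∩ G.neighborFinset w).card < 2) :
    (G.edgeFinset.card : ℝ) ≤
        (1 / 2) * (1 + Real.sqrt (4 * (Fintype.card V : ℝ) - 3)) *
          (Fintype.card V : ℝ) / 2 ∧
      (1 ≤ Fintype.card V →
        (G.edgeFinset.card : ℝ) ≤ (Fintype.card V : ℝ) ^ ((3 : ℝ) / 2)) := by
  exact k22_aux2 G (k22_aux1 G hfree)
end

section
/- Let G be a simple graph on n vertices in which no two distinct vertices have t or more common neighbors (t >= 2). Then |E(G)| = O(n^(2 - 1/t)). -/
open Finset

theorem few_common_neighbors_edge_bound (t : ℕ) (ht : 2 ≤ t) :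
    ∃ c : ℝ, ∀ (V : Type) [Fintype V] [DecidableEq V]
      (G : SimpleGraph V) [DecidableRel G.Adj],
      (∀ u w : V, u ≠ w →
        (G.neighborFinset u ∩ G.neighborFinset w).card < t) →
      (G.edgeFinset.card : ℝ) ≤ c * (Fintype.card V : ℝ) ^ (2 - 1 / (t : ℝ)) := by
  refine ⟨(t : ℝ), ?_⟩
  intro V _ _ G _ hcom
  set n := Fintype.card V with hn
  set E := G.edgeFinset.card with hE
  have ht1 : 1 ≤ t := by omega
  have hnn : n ≤ n * n := by nlinarith
  -- double counting paths of length two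
  have hdc : ∑ v : V, (G.neighborFinset v).offDiag.card
      = ∑ p ∈ (univ : Finset V).offDiag,
          (G.neighborFinset p.1 ∩ G.neighborFinset p.2).card := by
    have h1 : ∀ v : V, (G.neighborFinset v).offDiag
        = (univ : Finset V).offDiag.filter (fun p => G.Adj v p.1 ∧ G.Adj v p.2) := by
      intro v
      ext p
      simp [Finset.mem_offDiag, SimpleGraph.mem_neighborFinset]
      tauto
    have h2 : ∀ p : V × V, G.neighborFinset p.1 ∩ G.neighborFinset p.2
        = (univ : Finset V).filter (fun v => G.Adj v p.1 ∧ G.Adj v p.2) := by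
      intro p
      ext v
      simp [SimpleGraph.mem_neighborFinset, G.adj_comm]
    simp only [h1, h2, Finset.card_filter]
    exact Finset.sum_comm
  -- bound on the codegree sum
  have hbound : ∑ v : V, (G.degree v * G.degree v - G.degree v) ≤ (t - 1) * (n * n - n) := by
    calc ∑ v : V, (G.degree v * G.degree v - G.degree v)
        = ∑ v : V, (G.neighborFinset v).offDiag.card := by
          refine Finset.sum_congr rfl fun v _ => ?_
          rw [Finset.offDiag_card, SimpleGraph.card_neighborFinset_eq_degree]
      _ = ∑ p ∈ (univ : Finset V).offDiag,
          (G.neighborFinset p.1 ∩ G.neighborFinset p.2).card := hdc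
      _ ≤ ∑ _p ∈ (univ : Finset V).offDiag, (t - 1) := by
          refine Finset.sum_le_sum ?_
          intro p hp
          have := hcom p.1 p.2 (Finset.mem_offDiag.mp hp).2.2
          omega
      _ = (univ : Finset V).offDiag.card * (t - 1) := by
          rw [Finset.sum_const, smul_eq_mul]
      _ = (t - 1) * (n * n - n) := by
          rw [Finset.offDiag_card, Finset.card_univ, ← hn, mul_comm]
  have hsum : ∑ v : V, G.degree v = 2 * E := G.sum_degrees_eq_twice_card_edges
  -- sum of squares bound
  have hsq : ∑ v : V, G.degree v ^ 2 ≤ (t - 1) * (n * n - n) + 2 * E := by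
    have hdd : ∀ v : V, G.degree v ^ 2
        = (G.degree v * G.degree v - G.degree v) + G.degree v := by
      intro v
      have hle : G.degree v ≤ G.degree v * G.degree v := by nlinarith
      rw [sq, Nat.sub_add_cancel hle]
    rw [Finset.sum_congr rfl (fun v _ => hdd v), Finset.sum_add_distrib, hsum]
    exact Nat.add_le_add_right hbound _
  -- to the reals
  have hE0 : (0 : ℝ) ≤ (E : ℝ) := Nat.cast_nonneg E
  have hn0' : (0 : ℝ) ≤ (n : ℝ) := Nat.cast_nonneg n
  have ht0 : (2 : ℝ) ≤ (t : ℝ) := by exact_mod_cast ht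
  have h2 : (∑ v : V, (G.degree v : ℝ) ^ 2)
      ≤ ((t : ℝ) - 1) * ((n : ℝ) * (n : ℝ) - (n : ℝ)) + 2 * (E : ℝ) := by
    calc (∑ v : V, (G.degree v : ℝ) ^ 2)
        = ((∑ v : V, G.degree v ^ 2 : ℕ) : ℝ) := by push_cast; rfl
      _ ≤ (((t - 1) * (n * n - n) + 2 * E : ℕ) : ℝ) := by exact_mod_cast hsq
      _ = ((t : ℝ) - 1) * ((n : ℝ) * (n : ℝ) - (n : ℝ)) + 2 * (E : ℝ) := by
          push_cast [Nat.cast_sub ht1, Nat.cast_sub hnn]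
          ring
  have hcs : (2 * (E : ℝ)) ^ 2 ≤ (n : ℝ) * ∑ v : V, (G.degree v : ℝ) ^ 2 := by
    have h := sq_sum_le_card_mul_sum_sq (s := (univ : Finset V))
      (f := fun v => (G.degree v : ℝ))
    have hl : (∑ v : V, (G.degree v : ℝ)) = 2 * (E : ℝ) := by
      rw [← Nat.cast_sum]
      rw [hsum]
      push_cast; ring
    rw [hl, Finset.card_univ, ← hn] at h
    exact h
  have hkey : 4 * (E : ℝ) ^ 2 ≤ (t : ℝ) * (n : ℝ) ^ 3 + 2 * (E : ℝ) * (n : ℝ) := by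
    nlinarith [mul_le_mul_of_nonneg_left h2 hn0', sq_nonneg ((n : ℝ))]
  -- conclude
  rcases Nat.eq_zero_or_pos E with hEz | hEpos
  · rw [hEz]
    have : (0 : ℝ) ≤ (t : ℝ) * (n : ℝ) ^ (2 - 1 / (t : ℝ)) := by positivity
    simpa using this
  rcases Nat.eq_zero_or_pos n with h0 | hn1
  · -- no vertices means no edges
    have : IsEmpty V := Fintype.card_eq_zero_iff.mp h0
    have : (univ : Finset V) = ∅ := Finset.univ_eq_empty
    rw [this, Finset.sum_empty] at hsum
    omega
  · have hn0 : (1 : ℝ) ≤ (n : ℝ) := by exact_mod_cast hn1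
    have h32 : (E : ℝ) ≤ (t : ℝ) * (n : ℝ) ^ ((3 : ℝ) / 2) := by
      have hpow : ((n : ℝ) ^ ((3 : ℝ) / 2)) ^ 2 = (n : ℝ) ^ 3 := by
        rw [← Real.rpow_natCast ((n : ℝ) ^ ((3 : ℝ) / 2)) 2,
          ← Real.rpow_natCast (n : ℝ) 3, ← Real.rpow_mul hn0']
        norm_num
      rcases le_or_gt (E : ℝ) (n : ℝ) with hEn | hEn
      · calc (E : ℝ) ≤ (n : ℝ) := hEn
          _ = 1 * (n : ℝ) ^ (1 : ℝ) := by rw [Real.rpow_one, one_mul]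
          _ ≤ (t : ℝ) * (n : ℝ) ^ ((3 : ℝ) / 2) := by
              apply mul_le_mul (by linarith)
                (Real.rpow_le_rpow_of_exponent_le hn0 (by norm_num))
                (by positivity) (by linarith)
      · have hq : (E : ℝ) ^ 2 ≤ ((t : ℝ) * (n : ℝ) ^ ((3 : ℝ) / 2)) ^ 2 := by
          rw [mul_pow, hpow]
          nlinarith [mul_le_mul_of_nonneg_left hEn.le
              (by positivity : (0 : ℝ) ≤ 2 * (E : ℝ)),
            mul_nonneg (mul_nonneg (by linarith : (0 : ℝ) ≤ (t : ℝ))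
              (by linarith : (0 : ℝ) ≤ 2 * (t : ℝ) - 1)) (pow_nonneg hn0' 3)]
        exact (pow_le_pow_iff_left₀ hE0 (by positivity) two_ne_zero).mp hq
    have hexp : (n : ℝ) ^ ((3 : ℝ) / 2) ≤ (n : ℝ) ^ (2 - 1 / (t : ℝ)) := by
      apply Real.rpow_le_rpow_of_exponent_le hn0
      have : 1 / (t : ℝ) ≤ 1 / 2 :=
        one_div_le_one_div_of_le (by norm_num) ht0
      linarith
    calc (E : ℝ) ≤ (t : ℝ) * (n : ℝ) ^ ((3 : ℝ) / 2) := h32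
      _ ≤ (t : ℝ) * (n : ℝ) ^ (2 - 1 / (t : ℝ)) :=
          mul_le_mul_of_nonneg_left hexp (by linarith)
end

section
/- (Dependent random choice, graph case) Let G be a simple graph with n vertices and m edges, and let t, r, a, x be positive integers. If n * (m/n^2)^t - C(n, r) * (x/n)^t >= a, then G contains a set A of at least a vertices such that every r vertices of A have at least x common neighbors. -/
open Finset

theorem dependent_random_choice {V : Type*} [Fintype V] [DecidableEq V]
    (G : SimpleGraph V) [DecidableRel G.Adj] (t r a x : ℕ)
    (ht : 0 < t) (hr : 0 < r) (ha : 0 < a) (hx : 0 < x)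
    (h : (a : ℝ) ≤ (Fintype.card V : ℝ) *
        ((G.edgeFinset.card : ℝ) / (Fintype.card V : ℝ) ^ 2) ^ t -
        ((Fintype.card V).choose r : ℝ) * ((x : ℝ) / (Fintype.card V : ℝ)) ^ t) :
    ∃ A : Finset V, a ≤ A.card ∧ ∀ S ⊆ A, S.card = r →
      x ≤ (univ.filter (fun v : V => ∀ s ∈ S, G.Adj v s)).card := by
  classical
  obtain ⟨u, rfl⟩ : ∃ u, t = u + 1 := ⟨t - 1, by omega⟩
  set n := Fintype.card V with hn
  have hn0 : 0 < n := by
    rcases Nat.eq_zero_or_pos n with h0 | h0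
    · exfalso
      rw [h0] at h
      have hc : Nat.choose 0 r = 0 := Nat.choose_eq_zero_of_lt hr
      rw [hc] at h
      push_cast at h
      simp at h
      have : (0:ℝ) < a := by exact_mod_cast ha
      linarith
    · exact h0
  haveI : Nonempty V := Fintype.card_pos_iff.mp hn0
  have hnR : (0:ℝ) < n := by exact_mod_cast hn0
  set m := G.edgeFinset.card with hm
  set NS : Finset V → Finset V := fun S => univ.filter (fun v : V => ∀ s ∈ S, G.Adj v s)
    with hNS
  set A0 : (Fin (u+1) → V) → Finset V :=
    fun T => univ.filter (fun v : V => ∀ i, G.Adj v (T i)) with hA0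
  set bad : (Fin (u+1) → V) → Finset (Finset V) :=
    fun T => (powersetCard r univ).filter (fun S => S ⊆ A0 T ∧ (NS S).card < x) with hbad
  -- sum of |A0 T| over all T
  have key1 : ∀ v : V, (univ.filter (fun T : Fin (u+1) → V => ∀ i, G.Adj v (T i))).card
      = G.degree v ^ (u+1) := by
    intro v
    have he : (univ.filter (fun T : Fin (u+1) → V => ∀ i, G.Adj v (T i)))
        = Fintype.piFinset (fun _ : Fin (u+1) => G.neighborFinset v) := by
      ext T
      simp [Fintype.mem_piFinset, SimpleGraph.mem_neighborFinset]
    rw [he, Fintype.card_piFinset]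
    simp
  have hsum1 : ∑ T : Fin (u+1) → V, (A0 T).card = ∑ v : V, G.degree v ^ (u+1) := by
    simp only [hA0, Finset.card_filter]
    rw [Finset.sum_comm]
    refine Finset.sum_congr rfl fun v _ => ?_
    rw [← Finset.card_filter]
    exact key1 v
  -- sum of |bad T| over all T
  have key2 : ∀ S : Finset V, (univ.filter (fun T : Fin (u+1) → V => S ⊆ A0 T)).card
      = (NS S).card ^ (u+1) := by
    intro S
    have he : (univ.filter (fun T : Fin (u+1) → V => S ⊆ A0 T))
        = Fintype.piFinset (fun _ : Fin (u+1) => NS S) := by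
      ext T
      simp only [mem_filter, mem_univ, true_and, Fintype.mem_piFinset, hNS, hA0,
        Finset.subset_iff]
      constructor
      · exact fun hT i s hs => ((hT hs) i).symm
      · exact fun hT s hs i => ((hT i) s hs).symm
    rw [he, Fintype.card_piFinset]
    simp
  have hsum2 : ∑ T : Fin (u+1) → V, (bad T).card ≤ n.choose r * x ^ (u+1) := by
    have hcards : ∀ T, (bad T).card
        = ∑ S ∈ powersetCard r (univ : Finset V),
            (if S ⊆ A0 T ∧ (NS S).card < x then 1 else 0) := by
      intro T
      rw [hbad]
      exact Finset.card_filter _ _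
    calc ∑ T : Fin (u+1) → V, (bad T).card
        = ∑ S ∈ powersetCard r (univ : Finset V), ∑ T : Fin (u+1) → V,
            (if S ⊆ A0 T ∧ (NS S).card < x then 1 else 0) := by
          rw [← Finset.sum_comm]
          exact Finset.sum_congr rfl fun T _ => hcards T
      _ ≤ ∑ S ∈ powersetCard r (univ : Finset V), x ^ (u+1) := by
          refine Finset.sum_le_sum fun S _ => ?_
          by_cases hxS : (NS S).card < x
          · have heq : ∑ T : Fin (u+1) → V, (if S ⊆ A0 T ∧ (NS S).card < x then 1 else 0)
                = (univ.filter (fun T : Fin (u+1) → V => S ⊆ A0 T)).card :=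
              (Finset.sum_congr rfl fun T _ => by simp [hxS]).trans
                (Finset.card_filter _ _).symm
            rw [heq, key2 S]
            exact Nat.pow_le_pow_left (le_of_lt hxS) _
          · have : ∑ T : Fin (u+1) → V, (if S ⊆ A0 T ∧ (NS S).card < x then 1 else 0) = 0 := by
              refine Finset.sum_eq_zero fun T _ => by simp [hxS]
            rw [this]
            exact Nat.zero_le _
      _ = n.choose r * x ^ (u+1) := by
          rw [Finset.sum_const, Finset.card_powersetCard, card_univ, smul_eq_mul]
  -- degree sum and Jensen
  have hdeg : ∑ v : V, (G.degree v : ℝ) = 2 * (m : ℝ) := by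
    exact_mod_cast G.sum_degrees_eq_twice_card_edges
  have hjensen : (m:ℝ)^(u+1) / (n:ℝ)^u ≤ ∑ v : V, (G.degree v : ℝ)^(u+1) := by
    have h1 := pow_sum_div_card_le_sum_pow (s := (univ : Finset V))
      (f := fun v => (G.degree v : ℝ)) (fun i _ => by positivity) u
    rw [hdeg, card_univ] at h1
    refine le_trans ?_ h1
    have hmle : (m:ℝ)^(u+1) ≤ (2*(m:ℝ))^(u+1) := by
      have : (m:ℝ) ≤ 2*(m:ℝ) := by
        have : (0:ℝ) ≤ m := by positivity
        linarith
      exact pow_le_pow_left₀ (by positivity) this _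
    have hnu : (0:ℝ) < (n:ℝ)^u := by positivity
    exact div_le_div_of_nonneg_right hmle hnu.le
  -- main averaged inequality
  have halg : (n:ℝ)^(u+1) * ((n : ℝ) *
        ((m : ℝ) / (n : ℝ) ^ 2) ^ (u+1) -
        (n.choose r : ℝ) * ((x : ℝ) / (n : ℝ)) ^ (u+1))
      = (m:ℝ)^(u+1)/(n:ℝ)^u - (n.choose r : ℝ) * (x:ℝ)^(u+1) := by
    rw [div_pow, div_pow]
    field_simp
    ring
  have hmul := mul_le_mul_of_nonneg_left h (le_of_lt (pow_pos hnR (u+1)))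
  rw [halg] at hmul
  have hbadR : (∑ T : Fin (u+1) → V, ((bad T).card : ℝ)) ≤ (n.choose r : ℝ) * (x:ℝ)^(u+1) := by
    calc (∑ T : Fin (u+1) → V, ((bad T).card : ℝ))
        = ((∑ T : Fin (u+1) → V, (bad T).card : ℕ) : ℝ) := by push_cast; ring
      _ ≤ ((n.choose r * x ^ (u+1) : ℕ) : ℝ) := by exact_mod_cast hsum2
      _ = (n.choose r : ℝ) * (x:ℝ)^(u+1) := by push_cast; ring
  have hA0R : (∑ T : Fin (u+1) → V, ((A0 T).card : ℝ))
      = ∑ v : V, (G.degree v : ℝ)^(u+1) := by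
    calc (∑ T : Fin (u+1) → V, ((A0 T).card : ℝ))
        = ((∑ T : Fin (u+1) → V, (A0 T).card : ℕ) : ℝ) := by push_cast; ring
      _ = ((∑ v : V, G.degree v ^ (u+1) : ℕ) : ℝ) := by exact_mod_cast hsum1
      _ = ∑ v : V, (G.degree v : ℝ)^(u+1) := by push_cast; ring
  have hmain : ∑ _T : Fin (u+1) → V, (a : ℝ)
      ≤ ∑ T : Fin (u+1) → V, (((A0 T).card : ℝ) - ((bad T).card : ℝ)) := by
    rw [Finset.sum_const, Finset.sum_sub_distrib, hA0R, card_univ]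
    have hcardfun : Fintype.card (Fin (u+1) → V) = n ^ (u+1) := by
      rw [Fintype.card_fun]; simp [hn]
    rw [hcardfun, nsmul_eq_mul]
    push_cast
    nlinarith [hjensen, hbadR, hmul]
  obtain ⟨T, -, hT⟩ := Finset.exists_le_of_sum_le (univ_nonempty) hmain
  have hTnat : (bad T).card + a ≤ (A0 T).card := by
    have : ((bad T).card : ℝ) + (a : ℝ) ≤ ((A0 T).card : ℝ) := by linarith
    exact_mod_cast this
  -- construct A by removing one vertex from each bad set
  set g : Finset V → V := fun S => if hS : S.Nonempty then hS.choose else Classical.arbitrary V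
    with hg
  refine ⟨A0 T \ (bad T).image g, ?_, ?_⟩
  · have h1 := Finset.le_card_sdiff ((bad T).image g) (A0 T)
    have h2 : ((bad T).image g).card ≤ (bad T).card := Finset.card_image_le
    omega
  · intro S hS hScard
    by_contra hcon
    push_neg at hcon
    have hSsub : S ⊆ A0 T := hS.trans (Finset.sdiff_subset)
    have hSbad : S ∈ bad T := by
      simp only [hbad, mem_filter, mem_powersetCard]
      exact ⟨⟨Finset.subset_univ S, hScard⟩, hSsub, hcon⟩
    have hSne : S.Nonempty := Finset.card_pos.mp (by omega)
    have hgS : g S ∈ S := by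
      rw [hg]
      simp only [dif_pos hSne]
      exact hSne.choose_spec
    have hmem : g S ∈ (bad T).image g := Finset.mem_image_of_mem g hSbad
    have := hS hgS
    rw [Finset.mem_sdiff] at this
    exact this.2 hmem
end

section
/- (Zarankiewicz-type bound via the letter method, key counting step) Let r, k, t, n, m be positive integers with t >= 2, and suppose f : Z -> N is a function on a set Z of size at most C(n, d) with sum_z f(z) = k * r and sum over z with f(z) >= t of C(f(z), t) <= C(r, t) * m. If k >= 2e * n^(d(1-1/t)) * m^(1/t) and r >= (t/(2e)) * (n^d/m)^(1/t), then k * r - C(r, t) * m > (t-1) * C(n, d) provided C(n,d) <= n^d, yielding a contradiction with (t-1) * |Z| >= k*r - C(r,t)*m. Conclude: no such f exists when additionally (t-1)*|{z : f(z) > 0}| >= sum_z f(z) - sum_{z: f(z) >= t}(f(z) - t + 1) >= k*r - C(r,t)*m. -/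
open Finset Nat

lemma aux_pow_le_choose {t a : ℕ} (h : t ≤ a) : a ^ t ≤ t ^ t * a.choose t := by
  have h1 : a ^ t * t ! = ∏ i ∈ range t, (a * (t - i)) := by
    rw [Finset.prod_mul_distrib, Finset.prod_const, Finset.card_range,
      ← Nat.descFactorial_eq_prod_range, Nat.descFactorial_self]
  have h2 : t ^ t * a.descFactorial t = ∏ i ∈ range t, (t * (a - i)) := by
    rw [Finset.prod_mul_distrib, Finset.prod_const, Finset.card_range,
      ← Nat.descFactorial_eq_prod_range]
  have h3 : a ^ t * t ! ≤ t ^ t * a.descFactorial t := by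
    rw [h1, h2]
    refine Finset.prod_le_prod' fun i hi => ?_
    rw [Nat.mul_sub, Nat.mul_sub]
    exact tsub_le_tsub (Nat.mul_comm a t ▸ le_refl _) (Nat.mul_le_mul_right i h)
  rw [Nat.descFactorial_eq_factorial_mul_choose] at h3
  have h4 : a ^ t * t ! ≤ (t ^ t * a.choose t) * t ! := by
    calc a ^ t * t ! ≤ t ^ t * (t ! * a.choose t) := h3
      _ = (t ^ t * a.choose t) * t ! := by ring
  exact Nat.le_of_mul_le_mul_right h4 (Nat.factorial_pos t)

lemma aux_tt_le_fact_exp (t : ℕ) : ((t : ℝ)) ^ t ≤ (t ! : ℝ) * Real.exp 1 ^ t := by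
  rw [Real.exp_one_pow]
  have hs := Real.sum_le_exp_of_nonneg (x := (t : ℝ)) (Nat.cast_nonneg t) (t + 1)
  have hsingle : (t : ℝ) ^ t / t ! ≤ ∑ i ∈ Finset.range (t + 1), (t : ℝ) ^ i / i ! :=
    Finset.single_le_sum (f := fun i => (t : ℝ) ^ i / i !) (fun i _ => by positivity)
      (Finset.self_mem_range_succ t)
  have h := hsingle.trans hs
  rw [div_le_iff₀ (by positivity : (0:ℝ) < (t ! : ℝ))] at h
  linarith

theorem letter_method_key_counting (d t n m k r : ℕ)
    (hd : 0 < d) (ht : 2 ≤ t) (hn : 0 < n) (hm : 0 < m) (hk : 0 < k) (hr : 0 < r)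
    (Z : Type*) [Fintype Z] [DecidableEq Z] (f : Z → ℕ)
    (hZ : Fintype.card Z ≤ n.choose d)
    (hnd : n.choose d ≤ n ^ d)
    (hsum : ∑ z, f z = k * r)
    (hchoose : ∑ z ∈ univ.filter (fun z => t ≤ f z), (f z).choose t ≤ r.choose t * m)
    (hkbig : 2 * Real.exp 1 * (n : ℝ) ^ ((d : ℝ) * (1 - 1 / (t : ℝ))) *
        (m : ℝ) ^ ((1 : ℝ) / (t : ℝ)) ≤ (k : ℝ))
    (hrbig : (t : ℝ) / (2 * Real.exp 1) *
        (((n : ℝ) ^ d) / (m : ℝ)) ^ ((1 : ℝ) / (t : ℝ)) ≤ (r : ℝ))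
    (hextra : ((k : ℝ) * r - (r.choose t : ℝ) * m ≤
        ((t : ℝ) - 1) * ((univ.filter (fun z => 0 < f z)).card : ℝ))) :
    False := by
  set e1 := Real.exp 1 with he1def
  have he1 : 0 < e1 := Real.exp_pos 1
  have htR : (2:ℝ) ≤ (t:ℝ) := by exact_mod_cast ht
  have htpos : (0:ℝ) < (t:ℝ) := by linarith
  have htne : ((t:ℝ)) ≠ 0 := ne_of_gt htpos
  have ht0 : t ≠ 0 := by omega
  have hmR : (0:ℝ) < (m:ℝ) := by exact_mod_cast hm
  set N : ℝ := (n:ℝ) ^ d with hNdef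
  have hN : 0 < N := by positivity
  set Mt : ℝ := (m:ℝ) ^ ((1:ℝ)/(t:ℝ)) with hMtdef
  have hMtpos : 0 < Mt := Real.rpow_pos_of_pos hmR _
  set N1 : ℝ := N ^ ((1:ℝ) - 1/(t:ℝ)) with hN1def
  set Nt : ℝ := N ^ ((1:ℝ)/(t:ℝ)) with hNtdef
  have hN1pos : 0 < N1 := Real.rpow_pos_of_pos hN _
  have hNtpos : 0 < Nt := Real.rpow_pos_of_pos hN _
  have hsplitN : N1 * Nt = N := by
    rw [hN1def, hNtdef, ← Real.rpow_add hN]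
    norm_num
  have hNtt : Nt ^ t = N := by
    rw [hNtdef, ← Real.rpow_natCast (N ^ ((1:ℝ)/(t:ℝ))) t, ← Real.rpow_mul hN.le,
      one_div, inv_mul_cancel₀ htne, Real.rpow_one]
  have hMtt : Mt ^ t = (m:ℝ) := by
    rw [hMtdef, ← Real.rpow_natCast ((m:ℝ) ^ ((1:ℝ)/(t:ℝ))) t, ← Real.rpow_mul hmR.le,
      one_div, inv_mul_cancel₀ htne, Real.rpow_one]
  have hN1t : N1 ^ t = N ^ (t - 1 : ℕ) := by
    rw [hN1def, ← Real.rpow_natCast (N ^ ((1:ℝ) - 1/(t:ℝ))) t, ← Real.rpow_mul hN.le,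
      ← Real.rpow_natCast N (t-1)]
    congr 1
    have : ((t - 1 : ℕ) : ℝ) = (t:ℝ) - 1 := by
      push_cast [Nat.cast_sub (by omega : 1 ≤ t)]; ring
    rw [this]
    field_simp
  -- rewrite hypotheses
  have hkb' : 2 * e1 * N1 * Mt ≤ (k:ℝ) := by
    have hrw : (n:ℝ) ^ ((d : ℝ) * (1 - 1 / (t : ℝ))) = N1 := by
      rw [Real.rpow_mul (Nat.cast_nonneg n), Real.rpow_natCast]
    rw [hrw] at hkbig
    exact hkbig
  have hrb' : (t:ℝ)/(2*e1) * (Nt/Mt) ≤ (r:ℝ) := by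
    have hrw : ((N) / (m:ℝ)) ^ ((1:ℝ)/(t:ℝ)) = Nt / Mt := Real.div_rpow hN.le hmR.le _
    rw [← hrw]
    exact hrbig
  -- step 1 : t * N ≤ k * r
  have h1 : (t:ℝ) * N ≤ (k:ℝ) * r := by
    have hprod := mul_le_mul hkb' hrb' (by positivity) (Nat.cast_nonneg k)
    have heq : (2*e1*N1*Mt) * ((t:ℝ)/(2*e1) * (Nt/Mt)) = (t:ℝ) * (N1 * Nt) := by
      field_simp
    rw [heq, hsplitN] at hprod
    exact hprod
  -- the heavy set
  set A : Finset Z := univ.filter (fun z => t ≤ f z) with hAdef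
  set S : ℝ := ∑ z ∈ A, (f z : ℝ) with hSdef
  have hS0 : 0 ≤ S := Finset.sum_nonneg fun z _ => Nat.cast_nonneg _
  have hcardA : ((A.card : ℝ)) ≤ N := by
    have h1 : A.card ≤ Fintype.card Z := by
      simpa using Finset.card_filter_le univ (fun z => t ≤ f z)
    have : A.card ≤ n ^ d := le_trans h1 (le_trans hZ hnd)
    rw [hNdef]
    exact_mod_cast this
  -- step 2 : k*r ≤ (t-1)*N + S
  have hS1 : (k:ℝ) * r ≤ ((t:ℝ) - 1) * N + S := by
    have hnat : k * r ≤ (t - 1) * n ^ d + ∑ z ∈ A, f z := by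
      rw [← hsum, ← Finset.sum_filter_add_sum_filter_not univ (fun z => t ≤ f z) f]
      have hsmall : ∑ z ∈ univ.filter (fun z => ¬ t ≤ f z), f z ≤ (t - 1) * n ^ d := by
        calc ∑ z ∈ univ.filter (fun z => ¬ t ≤ f z), f z
            ≤ ∑ _z ∈ univ.filter (fun z => ¬ t ≤ f z), (t - 1) :=
              Finset.sum_le_sum fun z hz => by
                have := (Finset.mem_filter.mp hz).2; omega
          _ = (univ.filter (fun z => ¬ t ≤ f z)).card * (t - 1) := by
              rw [Finset.sum_const, smul_eq_mul]
          _ ≤ (n ^ d) * (t - 1) := by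
              refine Nat.mul_le_mul_right _ ?_
              exact le_trans (by simpa using Finset.card_filter_le univ _) (le_trans hZ hnd)
          _ = (t - 1) * n ^ d := Nat.mul_comm _ _
      calc (∑ z ∈ A, f z) + ∑ z ∈ univ.filter (fun z => ¬ t ≤ f z), f z
          ≤ (∑ z ∈ A, f z) + (t - 1) * n ^ d := Nat.add_le_add_left hsmall _
        _ = (t - 1) * n ^ d + ∑ z ∈ A, f z := Nat.add_comm _ _
    have hcast : (((t - 1) * n ^ d + ∑ z ∈ A, f z : ℕ) : ℝ)
        = ((t:ℝ) - 1) * N + S := by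
      push_cast [Nat.cast_sub (by omega : 1 ≤ t)]
      ring
    calc (k:ℝ) * r = ((k * r : ℕ) : ℝ) := by push_cast; ring
      _ ≤ (((t - 1) * n ^ d + ∑ z ∈ A, f z : ℕ) : ℝ) := by exact_mod_cast hnat
      _ = ((t:ℝ) - 1) * N + S := hcast
  -- step 3 : S ≤ e1 * Mt * N1 * r
  set B : ℝ := e1 * Mt * N1 with hBdef
  have hBpos : 0 < B := by positivity
  have hS2 : S ^ t ≤ (A.card : ℝ) ^ (t - 1) * ∑ z ∈ A, (f z : ℝ) ^ t := by
    have h := pow_sum_le_card_mul_sum_pow (s := A) (f := fun z => (f z : ℝ))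
      (fun i _ => Nat.cast_nonneg _) (t - 1)
    rwa [Nat.sub_add_cancel (by omega : 1 ≤ t)] at h
  have hS3 : ∑ z ∈ A, (f z : ℝ) ^ t ≤ (t:ℝ) ^ t * ((r.choose t : ℝ) * m) := by
    calc ∑ z ∈ A, (f z : ℝ) ^ t
        ≤ ∑ z ∈ A, (t:ℝ) ^ t * ((f z).choose t : ℝ) := by
          refine Finset.sum_le_sum fun z hz => ?_
          have hz' : t ≤ f z := (Finset.mem_filter.mp hz).2
          exact_mod_cast aux_pow_le_choose hz'
      _ = (t:ℝ) ^ t * ∑ z ∈ A, ((f z).choose t : ℝ) := by rw [Finset.mul_sum]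
      _ ≤ (t:ℝ) ^ t * ((r.choose t : ℝ) * m) := by
          refine mul_le_mul_of_nonneg_left ?_ (by positivity)
          exact_mod_cast hchoose
  have hC : (r.choose t : ℝ) ≤ e1 ^ t * (r:ℝ) ^ t / (t:ℝ) ^ t := by
    have h1' : (r.choose t : ℝ) ≤ (r:ℝ) ^ t / (t ! : ℝ) := by
      have := Nat.choose_le_pow_div (α := ℝ) t r
      simpa using this
    have h2' := aux_tt_le_fact_exp t
    rw [le_div_iff₀ (by positivity : (0:ℝ) < (t ! : ℝ))] at h1'
    rw [le_div_iff₀ (by positivity : (0:ℝ) < (t:ℝ) ^ t)]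
    have hcnn : (0:ℝ) ≤ (r.choose t : ℝ) := Nat.cast_nonneg _
    have he1t : (0:ℝ) ≤ e1 ^ t := by positivity
    rw [← he1def] at h2'
    calc (r.choose t : ℝ) * (t:ℝ) ^ t ≤ (r.choose t : ℝ) * ((t ! : ℝ) * e1 ^ t) :=
          mul_le_mul_of_nonneg_left h2' hcnn
      _ = ((r.choose t : ℝ) * (t ! : ℝ)) * e1 ^ t := by ring
      _ ≤ (r:ℝ) ^ t * e1 ^ t := mul_le_mul_of_nonneg_right h1' he1t
      _ = e1 ^ t * (r:ℝ) ^ t := by ring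
  have hSt : S ^ t ≤ (B * r) ^ t := by
    have hb : (B * r) ^ t = N ^ (t - 1 : ℕ) * (e1 ^ t * (r:ℝ) ^ t * (m:ℝ)) := by
      rw [hBdef]
      rw [mul_pow, mul_pow, mul_pow, hMtt, hN1t]
      ring
    rw [hb]
    calc S ^ t ≤ (A.card : ℝ) ^ (t - 1) * ∑ z ∈ A, (f z : ℝ) ^ t := hS2
      _ ≤ N ^ (t - 1 : ℕ) * ((t:ℝ) ^ t * ((r.choose t : ℝ) * m)) := by
          refine mul_le_mul (pow_le_pow_left₀ (Nat.cast_nonneg _) hcardA _) hS3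
            (Finset.sum_nonneg fun z _ => by positivity) (by positivity)
      _ ≤ N ^ (t - 1 : ℕ) * ((t:ℝ) ^ t * ((e1 ^ t * (r:ℝ) ^ t / (t:ℝ) ^ t) * m)) := by
          refine mul_le_mul_of_nonneg_left ?_ (by positivity)
          refine mul_le_mul_of_nonneg_left ?_ (by positivity)
          exact mul_le_mul_of_nonneg_right hC hmR.le
      _ = N ^ (t - 1 : ℕ) * (e1 ^ t * (r:ℝ) ^ t * (m:ℝ)) := by
          field_simp
  have hS : S ≤ B * r := by
    have := (pow_le_pow_iff_left₀ hS0 (by positivity : (0:ℝ) ≤ B * r) ht0)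
    exact this.mp hSt
  -- step 4 : B * r ≤ (t-1) * N
  have hBr : B * (r:ℝ) ≤ ((t:ℝ) - 1) * N := by
    have hk2 : 2 * (B * r) ≤ (k:ℝ) * r := by
      have := mul_le_mul_of_nonneg_right hkb' (Nat.cast_nonneg r)
      calc 2 * (B * r) = (2 * e1 * N1 * Mt) * r := by rw [hBdef]; ring
        _ ≤ (k:ℝ) * r := this
    linarith
  -- step 5 : choose * m < N
  have hfinal : (r.choose t : ℝ) * m < N := by
    have her : e1 * r ≤ ((t:ℝ) - 1) * (Nt / Mt) := by
      have hmulpos : (0:ℝ) < Mt * N1 := by positivity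
      have h' : e1 * r * (Mt * N1) ≤ (((t:ℝ) - 1) * (Nt / Mt)) * (Mt * N1) := by
        have e1eq : e1 * (r:ℝ) * (Mt * N1) = B * r := by rw [hBdef]; ring
        have e2eq : (((t:ℝ) - 1) * (Nt / Mt)) * (Mt * N1) = ((t:ℝ) - 1) * N := by
          rw [← hsplitN]; field_simp
        rw [e1eq, e2eq]
        exact hBr
      exact le_of_mul_le_mul_right h' hmulpos
    have hern : (0:ℝ) ≤ e1 * r := by positivity
    have hrt : (e1 * r) ^ t ≤ (((t:ℝ) - 1) * (Nt / Mt)) ^ t :=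
      pow_le_pow_left₀ hern her t
    have hrhs : (((t:ℝ) - 1) * (Nt / Mt)) ^ t = ((t:ℝ) - 1) ^ t * (N / m) := by
      rw [mul_pow, div_pow, hNtt, hMtt]
    have hchain : (r.choose t : ℝ) * m ≤ (((t:ℝ)-1)/(t:ℝ)) ^ t * N := by
      calc (r.choose t : ℝ) * m ≤ (e1 ^ t * (r:ℝ) ^ t / (t:ℝ) ^ t) * m :=
            mul_le_mul_of_nonneg_right hC hmR.le
        _ = (e1 * r) ^ t * m / (t:ℝ) ^ t := by rw [mul_pow]; ring
        _ ≤ (((t:ℝ) - 1) ^ t * (N / m)) * m / (t:ℝ) ^ t := by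
            have hrt' : (e1 * r) ^ t ≤ ((t:ℝ) - 1) ^ t * (N / m) := le_of_le_of_eq hrt hrhs
            gcongr
        _ = (((t:ℝ)-1)/(t:ℝ)) ^ t * N := by
            rw [div_pow]; field_simp
    have hlt1 : (((t:ℝ)-1)/(t:ℝ)) ^ t < 1 := by
      refine pow_lt_one₀ (div_nonneg (by linarith) htpos.le) ?_ ht0
      rw [div_lt_one htpos]; linarith
    calc (r.choose t : ℝ) * m ≤ (((t:ℝ)-1)/(t:ℝ)) ^ t * N := hchain
      _ < 1 * N := by exact mul_lt_mul_of_pos_right hlt1 hN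
      _ = N := one_mul N
  -- conclude
  have hcardP : ((univ.filter (fun z => 0 < f z)).card : ℝ) ≤ N := by
    have h1' : (univ.filter (fun z => 0 < f z)).card ≤ n ^ d :=
      le_trans (by simpa using Finset.card_filter_le univ _) (le_trans hZ hnd)
    rw [hNdef]; exact_mod_cast h1'
  have hext2 : (k:ℝ) * r - (r.choose t : ℝ) * m ≤ ((t:ℝ) - 1) * N := by
    refine hextra.trans ?_
    exact mul_le_mul_of_nonneg_left hcardP (by linarith)
  have hexp : ((t:ℝ) - 1) * N = (t:ℝ) * N - N := by ring
  linarith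
end
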